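/- Let X be a compact Hausdorff topological space and let x₀ ∈ X be a fixed point. In the ring C(X, ℂ × ℂ) of continuous functions from X to ℂ × ℂ (with pointwise operations), the set {f ∈ C(X, ℂ × ℂ) : the second component of f(x₀) equals 0} is a maximal ideal; symmetrically, for fixed y₀ ∈ X, the set {f : the first component of f(y₀) equals 0} is a maximal ideal. -/

import Mathlib

open ContinuousMap

private noncomputable def evalHom (X : Type*) [TopologicalSpace X] (x : X) :
    C(X, ℂ × ℂ) →+* (ℂ × ℂ) where
  toFun f := f x
  map_one' := rfl
  map_mul' _ _ := rfl
  map_zero' := rfl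
  map_add' _ _ := rfl

/-- For a compact Hausdorff space `X` and fixed points `x₀, y₀ ∈ X`, in the ring
`C(X, ℂ × ℂ)` of continuous bicomplex-valued functions, the set of functions whose
value at `x₀` has vanishing second component is a maximal ideal, and symmetrically
the set of functions whose value at `y₀` has vanishing first component is a
maximal ideal. -/
theorem maximal_ideals_of_bicomplex_continuous_functions
    (X : Type*) [TopologicalSpace X] [CompactSpace X] [T2Space X] (x₀ y₀ : X) :
    (∃ I : Ideal C(X, ℂ × ℂ), (I : Set C(X, ℂ × ℂ)) = {f | (f x₀).2 = 0} ∧ I.IsMaximal) ∧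
    (∃ J : Ideal C(X, ℂ × ℂ), (J : Set C(X, ℂ × ℂ)) = {f | (f y₀).1 = 0} ∧ J.IsMaximal) := by
  constructor
  · refine ⟨RingHom.ker ((RingHom.snd ℂ ℂ).comp (evalHom X x₀)), ?_, ?_⟩
    · ext f; rfl
    · exact RingHom.ker_isMaximal_of_surjective _
        (fun c => ⟨ContinuousMap.const X (0, c), rfl⟩)
  · refine ⟨RingHom.ker ((RingHom.fst ℂ ℂ).comp (evalHom X y₀)), ?_, ?_⟩
    · ext f; rfl
    · exact RingHom.ker_isMaximal_of_surjective _
        (fun c => ⟨ContinuousMap.const X (c, 0), rfl⟩)
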